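/- arXiv:2311.14023 — 2 statements merged into one kernel-verified Lean document; each statement's English description precedes it below -/
import Mathlib

section
/- Let B and C be n×n real SPSD matrices with B ⪰ C ⪰ 0. Then for every p ∈ [1,∞), ‖B − C‖_(p) ≤ (‖B‖_(p)^p − ‖C‖_(p)^p)^{1/p}, i.e. tr((B − C)^p) + tr(C^p) ≤ tr(B^p). Moreover, when p = 1 the inequality is an equality: ‖B − C‖_* = ‖B‖_* − ‖C‖_*. -/
/-!
Put `A = B - C`, so `B = A + C` with `A, C ⪰ 0`, and write `β`, `uᵢ` for the eigenvalues and
eigenvectors of `B`. The heart of the matter is `tr (A ^ (s + 1)) ≤ tr (B ^ s A)` for `0 ⪯ A ⪯ B`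
and `s ≥ 0`. If `A v = α v` with `‖v‖ = 1` and `α > 0`, then `α v vᵀ ⪯ A ⪯ B`; testing this
against suitable vectors in the eigenbasis of `B` shows that `α` is at most the harmonic mean of
the `βᵢ` with weights `⟨v, uᵢ⟩²`, so harmonic ≤ geometric ≤ power mean gives
`α ^ s ≤ Σᵢ ⟨v, uᵢ⟩² βᵢ ^ s = ⟨v, B ^ s v⟩`. Multiplying by `α` and summing over an eigenbasis
of `A` yields the key inequality. Applying it to `A` and to `C` and adding,
`tr (A ^ p) + tr (C ^ p) ≤ tr (B ^ (p - 1) (A + C)) = tr (B ^ p)`. For positive semidefinite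
matrices the singular values are the eigenvalues, and the equality for `p = 1` is linearity of
the trace.
-/

open Matrix BigOperators

/-- `M = U * diagonal μ * Uᵀ` is a spectral (eigen)decomposition of the symmetric matrix `M`,
with orthogonal `U` and eigenvalues `μ` listed in nonincreasing order. -/
def IsSpectralDecomp {n : ℕ} (M U : Matrix (Fin n) (Fin n) ℝ) (μ : Fin n → ℝ) : Prop :=
  Uᵀ * U = 1 ∧ Antitone μ ∧ M = U * Matrix.diagonal μ * Uᵀ

/-- Truncation of a spectral decomposition to its `k` largest (first `k`) eigenvalues:
the best rank-`k` approximation `M_(k)` associated with the decomposition `(U, μ)`. -/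
noncomputable def trunc {n : ℕ} (k : ℕ) (U : Matrix (Fin n) (Fin n) ℝ) (μ : Fin n → ℝ) :
    Matrix (Fin n) (Fin n) ℝ :=
  U * Matrix.diagonal (fun i : Fin n => if (i : ℕ) < k then μ i else 0) * Uᵀ

/-- `f` is operator monotone on SPSD matrices: for all `m` and all `m × m` SPSD matrices
`B ⪰ C ⪰ 0`, one has `f(B) ⪰ f(C)`, where matrix functions are computed through (any)
spectral decomposition. -/
def OperatorMonotone (f : ℝ → ℝ) : Prop :=
  ∀ (m : ℕ) (B C U V : Matrix (Fin m) (Fin m) ℝ) (β γ : Fin m → ℝ),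
    IsSpectralDecomp B U β → IsSpectralDecomp C V γ →
    B.PosSemidef → C.PosSemidef → (B - C).PosSemidef →
    (U * Matrix.diagonal (f ∘ β) * Uᵀ - V * Matrix.diagonal (f ∘ γ) * Vᵀ).PosSemidef

/-- Squared Frobenius norm `‖M‖_F² = Σ_{i,j} M_{ij}²`. -/
noncomputable def frobSq {m l : ℕ} (M : Matrix (Fin m) (Fin l) ℝ) : ℝ :=
  ∑ i, ∑ j, (M i j) ^ 2

/-- Frobenius norm. -/
noncomputable def frobNorm {m l : ℕ} (M : Matrix (Fin m) (Fin l) ℝ) : ℝ :=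
  Real.sqrt (frobSq M)

/-- The eigenvalues of a Hermitian matrix listed in nonincreasing order:
`eigsDesc hM i` is the `(i+1)`-st largest eigenvalue of `M`. -/
noncomputable def eigsDesc {m : ℕ} {M : Matrix (Fin m) (Fin m) ℝ} (hM : M.IsHermitian) :
    Fin m → ℝ :=
  fun i => (hM.eigenvalues ∘ Tuple.sort hM.eigenvalues) i.rev

/-- The singular values of `M` in nonincreasing order: `svDesc M i` is the `(i+1)`-st largest
singular value of `M`, i.e. the square root of the `(i+1)`-st largest eigenvalue of `MᴴM`. -/
noncomputable def svDesc {m l : ℕ} (M : Matrix (Fin m) (Fin l) ℝ) : Fin l → ℝ :=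
  fun i => Real.sqrt (eigsDesc (show (Mᵀ * M).IsHermitian by
    simpa using Matrix.isHermitian_conjTranspose_mul_self M) i)

/-- Nuclear norm: the sum of the singular values. -/
noncomputable def nuclearNorm {m l : ℕ} (M : Matrix (Fin m) (Fin l) ℝ) : ℝ :=
  ∑ i, svDesc M i

/-- Operator (spectral) norm: the largest singular value. -/
noncomputable def opNorm {m l : ℕ} (M : Matrix (Fin m) (Fin l) ℝ) : ℝ :=
  ⨆ i, svDesc M i

/-- `p`-th power of the Schatten `p`-norm: `‖M‖_(p)^p = Σᵢ σᵢ(M)^p`. -/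
noncomputable def schattenPow {m l : ℕ} (p : ℝ) (M : Matrix (Fin m) (Fin l) ℝ) : ℝ :=
  ∑ i, svDesc M i ^ p

/-- Schatten `p`-norm: `‖M‖_(p) = (Σᵢ σᵢ(M)^p)^(1/p)`. -/
noncomputable def schattenNorm {m l : ℕ} (p : ℝ) (M : Matrix (Fin m) (Fin l) ℝ) : ℝ :=
  (schattenPow p M) ^ (1 / p)

/-- `P` is the orthogonal projection onto the column space of `M`. -/
def IsOrthProjOnto {m l : ℕ} (P : Matrix (Fin m) (Fin m) ℝ) (M : Matrix (Fin m) (Fin l) ℝ) :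
    Prop :=
  Pᵀ = P ∧ P * P = P ∧ P * M = M ∧ ∃ Y : Matrix (Fin l) (Fin m) ℝ, P = M * Y

open Finset

namespace Real

variable {ι : Type*} (s : Finset ι) {w z : ι → ℝ}

lemma prod_rpow_rpow_le_sum_mul_rpow (hw : ∀ i ∈ s, 0 ≤ w i) (hw' : ∑ i ∈ s, w i = 1)
    (hz : ∀ i ∈ s, 0 ≤ z i) (r : ℝ) :
    (∏ i ∈ s, z i ^ w i) ^ r ≤ ∑ i ∈ s, w i * z i ^ r := by
  calc (∏ i ∈ s, z i ^ w i) ^ r = ∏ i ∈ s, (z i ^ r) ^ w i := by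
        rw [← finsetProd_rpow s _ fun i hi => rpow_nonneg (hz i hi) _]
        refine prod_congr rfl fun i hi => ?_
        rw [← rpow_mul (hz i hi), ← rpow_mul (hz i hi), mul_comm]
    _ ≤ ∑ i ∈ s, w i * z i ^ r :=
        geom_mean_le_arith_mean_weighted s w _ hw hw' fun i hi => rpow_nonneg (hz i hi) _

lemma rpow_le_sum_mul_rpow_of_mul_sum_mul_inv_le_one (hw : ∀ i ∈ s, 0 ≤ w i)
    (hw' : ∑ i ∈ s, w i = 1) (hz : ∀ i ∈ s, 0 ≤ z i) (hwz : ∀ i ∈ s, z i = 0 → w i = 0)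
    {a : ℝ} (ha : 0 < a) (h : a * ∑ i ∈ s, w i * (z i)⁻¹ ≤ 1) {r : ℝ} (hr : 0 ≤ r) :
    a ^ r ≤ ∑ i ∈ s, w i * z i ^ r := by
  set G := ∏ i ∈ s, z i ^ w i
  have hG : 0 < G := prod_pos fun i hi => by
    rcases (hz i hi).eq_or_lt with h0 | hpos
    · rw [← h0, hwz i hi h0.symm, rpow_zero]
      exact one_pos
    · exact rpow_pos_of_pos hpos _
  -- the case `r = -1` says that the harmonic mean is at most the geometric mean `G`
  have haG : a ≤ G := by
    have hGinv := prod_rpow_rpow_le_sum_mul_rpow s hw hw' hz (-1)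
    simp only [rpow_neg_one] at hGinv
    have := (mul_le_mul_of_nonneg_left hGinv ha.le).trans h
    rwa [mul_inv_le_iff₀ hG, one_mul] at this
  calc a ^ r ≤ G ^ r := rpow_le_rpow ha.le haG hr
    _ ≤ ∑ i ∈ s, w i * z i ^ r := prod_rpow_rpow_le_sum_mul_rpow s hw hw' hz r

end Real

namespace Matrix.IsHermitian

variable {ι : Type*} [Fintype ι] [DecidableEq ι] {A : Matrix ι ι ℝ}

lemma star_eigenvectorUnitary_mul_mul_eigenvectorUnitary (hA : A.IsHermitian) :
    star (hA.eigenvectorUnitary : Matrix ι ι ℝ) * A * hA.eigenvectorUnitary =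
      diagonal hA.eigenvalues := by
  simpa [Unitary.conjStarAlgAut_star_apply] using hA.conjStarAlgAut_star_eigenvectorUnitary

lemma dotProduct_mulVec_eq_sum_eigenvalues_mul_sq (hA : A.IsHermitian) (x : ι → ℝ) :
    x ⬝ᵥ A *ᵥ x = ∑ k, hA.eigenvalues k *
      ((star (hA.eigenvectorUnitary : Matrix ι ι ℝ) *ᵥ x) k) ^ 2 := by
  set U : Matrix ι ι ℝ := (hA.eigenvectorUnitary : Matrix ι ι ℝ)
  have hAU : A = U * diagonal hA.eigenvalues * star U := by
    simpa [Unitary.conjStarAlgAut_apply] using hA.spectral_theorem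
  conv_lhs => rw [hAU, ← mulVec_mulVec, ← mulVec_mulVec, dotProduct_mulVec, ← mulVec_transpose]
  simp [dotProduct, mulVec_diagonal, sq, mul_left_comm, star_eq_conjTranspose,
    conjTranspose_eq_transpose_of_trivial]

lemma sum_comp_eigenvalues_of_charpoly_eq (hA : A.IsHermitian) {v : ι → ℝ}
    (h : A.charpoly = ∏ i, (Polynomial.X - Polynomial.C (v i))) (g : ℝ → ℝ) :
    ∑ i, g (hA.eigenvalues i) = ∑ i, g (v i) := by
  have hroots : univ.val.map hA.eigenvalues = univ.val.map v := by
    have hprod : ∏ i, (Polynomial.X - Polynomial.C (v i)) =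
        ((univ.val.map v).map fun a => Polynomial.X - Polynomial.C a).prod := by
      rw [Multiset.map_map]; rfl
    have := hA.roots_charpoly_eq_eigenvalues
    rw [h, hprod, Polynomial.roots_multiset_prod_X_sub_C] at this
    simpa using this.symm
  have := congrArg (fun s => (s.map g).sum) hroots
  simp only [Multiset.map_map] at this
  exact this

lemma sum_comp_eigenvalues_transpose_mul_self (hA : A.IsHermitian) (hAA : (Aᵀ * A).IsHermitian)
    (g : ℝ → ℝ) : ∑ i, g (hAA.eigenvalues i) = ∑ i, g (hA.eigenvalues i ^ 2) := by
  refine hAA.sum_comp_eigenvalues_of_charpoly_eq ?_ g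
  have hsq : Aᵀ * A = cfc (· ^ 2 : ℝ → ℝ) A := by
    rw [cfc_pow_id A 2 hA.isSelfAdjoint, sq, ← conjTranspose_eq_transpose_of_trivial, hA.eq]
  rw [hsq, hA.charpoly_cfc_eq]
  rfl

end Matrix.IsHermitian

lemma rpow_le_sum_sq_mul_rpow_of_forall_mul_sq_le {ι : Type*} [Fintype ι] [DecidableEq ι]
    {β v : ι → ℝ} (hβ : ∀ i, 0 ≤ β i) (hv : ∑ i, v i ^ 2 = 1) {a : ℝ} (ha : 0 < a)
    (h : ∀ z : ι → ℝ, a * (v ⬝ᵥ z) ^ 2 ≤ ∑ i, β i * z i ^ 2) {r : ℝ} (hr : 0 ≤ r) :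
    a ^ r ≤ ∑ i, v i ^ 2 * β i ^ r := by
  have hvβ : ∀ i ∈ univ, β i = 0 → v i ^ 2 = 0 := fun i _ hβi => by
    have := h (Pi.single i 1)
    simp only [dotProduct_single_one, Pi.single_apply, ite_pow, one_pow, zero_pow two_ne_zero,
      mul_ite, mul_one, mul_zero, sum_ite_eq', mem_univ, if_true, hβi] at this
    nlinarith [sq_nonneg (v i)]
  -- testing against `z = β⁻¹ v` (with `0⁻¹ = 0`) bounds `a` by the weighted harmonic mean of `β`
  have hharm : a * ∑ i, v i ^ 2 * (β i)⁻¹ ≤ 1 := by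
    set S := ∑ i, v i ^ 2 * (β i)⁻¹
    have hS : 0 ≤ S := sum_nonneg fun i _ => mul_nonneg (sq_nonneg _) (inv_nonneg.2 (hβ i))
    have := h fun i => v i * (β i)⁻¹
    have hvz : v ⬝ᵥ (fun i => v i * (β i)⁻¹) = S :=
      sum_congr rfl fun i _ => by ring
    have hβz : ∑ i, β i * (v i * (β i)⁻¹) ^ 2 = S := sum_congr rfl fun i _ => by
      rcases eq_or_ne (β i) 0 with h0 | hne
      · simp [h0]
      · field_simp
    rw [hvz, hβz] at this
    nlinarith
  exact Real.rpow_le_sum_mul_rpow_of_mul_sum_mul_inv_le_one univ (fun i _ => sq_nonneg _) hv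
    (fun i _ => hβ i) hvβ ha hharm hr

namespace Matrix.PosSemidef

variable {ι : Type*} [Fintype ι] [DecidableEq ι] {A B C : Matrix ι ι ℝ}

lemma sum_eigenvalues_rpow_succ_le (hA : A.PosSemidef) (hB : B.PosSemidef)
    (hAB : (B - A).PosSemidef) {s : ℝ} (hs : 0 ≤ s) :
    ∑ j, hA.1.eigenvalues j ^ (s + 1) ≤
      ∑ i, hB.1.eigenvalues i ^ s * (star (hB.1.eigenvectorUnitary : Matrix ι ι ℝ) * A *
        hB.1.eigenvectorUnitary) i i := by
  set α := hA.1.eigenvalues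
  set β := hB.1.eigenvalues
  set U : Matrix ι ι ℝ := (hB.1.eigenvectorUnitary : Matrix ι ι ℝ)
  set V : Matrix ι ι ℝ := (hA.1.eigenvectorUnitary : Matrix ι ι ℝ)
  -- `M j i` is the inner product of the `j`-th eigenvector of `A` with the `i`-th one of `B`
  set M := star V * U
  have hquadA : ∀ z, (U *ᵥ z) ⬝ᵥ A *ᵥ (U *ᵥ z) = ∑ j, α j * (M j ⬝ᵥ z) ^ 2 := fun z => by
    rw [hA.1.dotProduct_mulVec_eq_sum_eigenvalues_mul_sq, mulVec_mulVec]
    rfl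
  have hquadB : ∀ z, (U *ᵥ z) ⬝ᵥ B *ᵥ (U *ᵥ z) = ∑ i, β i * z i ^ 2 := fun z => by
    rw [hB.1.dotProduct_mulVec_eq_sum_eigenvalues_mul_sq, mulVec_mulVec,
      Unitary.coe_star_mul_self, one_mulVec]
  have hrow : ∀ j, ∑ i, M j i ^ 2 = 1 := fun j => by
    have hMM : M * star M = 1 := by
      rw [star_mul, star_star, mul_assoc, ← mul_assoc U,
        mem_unitaryGroup_iff.mp hB.1.eigenvectorUnitary.2, one_mul,
        mem_unitaryGroup_iff'.mp hA.1.eigenvectorUnitary.2]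
    have := congrFun (congrFun hMM j) j
    rw [mul_apply, one_apply_eq] at this
    simpa only [star_apply, star_trivial, sq] using this
  have hdiag : ∀ i, (star U * A * U) i i = ∑ j, α j * M j i ^ 2 := fun i => by
    have := hquadA (Pi.single i 1)
    rw [mulVec_mulVec, mulVec_single_one, mulVec_single_one] at this
    simp only [dotProduct_single_one] at this
    rw [← this, mul_assoc, mul_apply]
    simp only [dotProduct, col_apply, star_apply, star_trivial]
  have htest : ∀ j z, α j * (M j ⬝ᵥ z) ^ 2 ≤ ∑ i, β i * z i ^ 2 := fun j z => by
    have hAB' := hAB.dotProduct_mulVec_nonneg (U *ᵥ z)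
    rw [star_trivial, sub_mulVec, dotProduct_sub, sub_nonneg, hquadA, hquadB] at hAB'
    refine le_trans ?_ hAB'
    exact single_le_sum (f := fun k => α k * (M k ⬝ᵥ z) ^ 2)
      (fun k _ => mul_nonneg (hA.eigenvalues_nonneg k) (sq_nonneg _)) (mem_univ j)
  have hcol : ∀ j, α j ^ (s + 1) ≤ α j * ∑ i, M j i ^ 2 * β i ^ s := fun j => by
    rcases (show 0 ≤ α j from hA.eigenvalues_nonneg j).eq_or_lt with h0 | hpos
    · rw [← h0, Real.zero_rpow (by positivity), zero_mul]
    · rw [Real.rpow_add_one' hpos.le (by positivity), mul_comm]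
      exact mul_le_mul_of_nonneg_left (rpow_le_sum_sq_mul_rpow_of_forall_mul_sq_le
        hB.eigenvalues_nonneg (hrow j) hpos (htest j) hs) hpos.le
  calc ∑ j, α j ^ (s + 1) ≤ ∑ j, α j * ∑ i, M j i ^ 2 * β i ^ s := sum_le_sum fun j _ => hcol j
    _ = ∑ i, β i ^ s * (star U * A * U) i i := by
        simp only [hdiag, mul_sum]
        rw [sum_comm]
        exact sum_congr rfl fun i _ => sum_congr rfl fun j _ => by ring

lemma sum_eigenvalues_rpow_add_le (hA : A.PosSemidef) (hC : C.PosSemidef) (hB : B.PosSemidef)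
    (hACB : A + C = B) {p : ℝ} (hp : 1 ≤ p) :
    ∑ i, hA.1.eigenvalues i ^ p + ∑ i, hC.1.eigenvalues i ^ p ≤ ∑ i, hB.1.eigenvalues i ^ p := by
  set U : Matrix ι ι ℝ := (hB.1.eigenvectorUnitary : Matrix ι ι ℝ)
  set β := hB.1.eigenvalues
  obtain ⟨s, hs, rfl⟩ : ∃ s, 0 ≤ s ∧ p = s + 1 := ⟨p - 1, by linarith, by ring⟩
  have hBA : (B - A).PosSemidef := by rwa [← hACB, add_sub_cancel_left]
  have hBC : (B - C).PosSemidef := by rwa [← hACB, add_sub_cancel_right]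
  calc ∑ i, hA.1.eigenvalues i ^ (s + 1) + ∑ i, hC.1.eigenvalues i ^ (s + 1)
      ≤ ∑ i, β i ^ s * (star U * A * U) i i + ∑ i, β i ^ s * (star U * C * U) i i :=
        add_le_add (hA.sum_eigenvalues_rpow_succ_le hB hBA hs)
          (hC.sum_eigenvalues_rpow_succ_le hB hBC hs)
    _ = ∑ i, β i ^ s * (star U * B * U) i i := by
        rw [← sum_add_distrib, ← hACB]
        simp only [mul_add, add_mul, add_apply]
    _ = ∑ i, β i ^ (s + 1) := by
        rw [hB.1.star_eigenvectorUnitary_mul_mul_eigenvectorUnitary]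
        exact sum_congr rfl fun i _ => by
          rw [diagonal_apply_eq, Real.rpow_add_one' (hB.eigenvalues_nonneg i) (by positivity)]

end Matrix.PosSemidef

section SchattenOfPosSemidef

variable {m : ℕ} {M : Matrix (Fin m) (Fin m) ℝ}

lemma sum_comp_eigsDesc (hM : M.IsHermitian) (g : ℝ → ℝ) :
    ∑ i, g (eigsDesc hM i) = ∑ i, g (hM.eigenvalues i) :=
  Equiv.sum_comp (Fin.revPerm.trans (Tuple.sort hM.eigenvalues)) (fun i => g (hM.eigenvalues i))

lemma sum_comp_svDesc_of_isHermitian (hM : M.IsHermitian) (g : ℝ → ℝ) :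
    ∑ i, g (svDesc M i) = ∑ i, g |hM.eigenvalues i| := by
  simp only [svDesc, sum_comp_eigsDesc _ (fun t => g (Real.sqrt t)),
    hM.sum_comp_eigenvalues_transpose_mul_self _ (fun t => g (Real.sqrt t)), Real.sqrt_sq_eq_abs]

lemma schattenPow_of_posSemidef (hM : M.PosSemidef) (p : ℝ) :
    schattenPow p M = ∑ i, hM.1.eigenvalues i ^ p := by
  simp only [schattenPow, sum_comp_svDesc_of_isHermitian hM.1 (· ^ p),
    abs_of_nonneg (hM.eigenvalues_nonneg _)]

lemma nuclearNorm_of_posSemidef (hM : M.PosSemidef) : nuclearNorm M = M.trace := by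
  rw [nuclearNorm, hM.1.trace_eq_sum_eigenvalues]
  simpa [abs_of_nonneg (hM.eigenvalues_nonneg _)] using sum_comp_svDesc_of_isHermitian hM.1 id

end SchattenOfPosSemidef

lemma schattenPow_nonneg {m l : ℕ} (p : ℝ) (M : Matrix (Fin m) (Fin l) ℝ) :
    0 ≤ schattenPow p M :=
  sum_nonneg fun _ _ => Real.rpow_nonneg (Real.sqrt_nonneg _) _

/-- McCarthy-type inequality: for SPSD matrices `B ⪰ C ⪰ 0` and `p ∈ [1,∞)`,
`‖B − C‖_(p) ≤ (‖B‖_(p)^p − ‖C‖_(p)^p)^(1/p)`, i.e. `tr((B−C)^p) + tr(C^p) ≤ tr(B^p)`;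
and for `p = 1` the inequality is an equality: `‖B − C‖_* = ‖B‖_* − ‖C‖_*`. -/
theorem schatten_difference_bound
    (n : ℕ) (B C : Matrix (Fin n) (Fin n) ℝ)
    (hB : B.PosSemidef) (hC : C.PosSemidef) (hBC : (B - C).PosSemidef) :
    (∀ p : ℝ, 1 ≤ p →
      schattenNorm p (B - C) ≤ (schattenPow p B - schattenPow p C) ^ (1 / p) ∧
      schattenPow p (B - C) + schattenPow p C ≤ schattenPow p B) ∧
    nuclearNorm (B - C) = nuclearNorm B - nuclearNorm C := by
  have hpow : ∀ p : ℝ, 1 ≤ p → schattenPow p (B - C) + schattenPow p C ≤ schattenPow p B :=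
    fun p hp => by
      simpa only [schattenPow_of_posSemidef hBC, schattenPow_of_posSemidef hC,
        schattenPow_of_posSemidef hB] using
        hBC.sum_eigenvalues_rpow_add_le hC hB (sub_add_cancel B C) hp
  refine ⟨fun p hp => ⟨?_, hpow p hp⟩, ?_⟩
  · exact Real.rpow_le_rpow (schattenPow_nonneg p _)
      (by linarith [hpow p hp, schattenPow_nonneg p C]) (by positivity)
  · rw [nuclearNorm_of_posSemidef hBC, nuclearNorm_of_posSemidef hB, nuclearNorm_of_posSemidef hC,
      trace_sub]
end

section
/- Let A be an n×n real SPSD matrix with eigenvalues λ₁ ≥ … ≥ λₙ ≥ 0, let Q ∈ ℝ^{n×ℓ} have orthonormal columns, let 1 ≤ k < n and ε ≥ 0. Suppose that there exists an n×n orthogonal projector P̄ (P̄ = P̄ᵀ = P̄²) with rank(P̄) ≤ k and column space contained in the column space of Q such that ‖A − P̄A‖_* ≤ (1+ε)‖A − A_(k)‖_*. Let Â := A^{1/2} P A^{1/2} be the Nyström approximation of A with respect to Q, where P is the orthogonal projection onto the column space of A^{1/2}Q. Then ‖A − Â_(k)‖_* ≤ (1+ε)‖A − A_(k)‖_*. 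-/
open Matrix BigOperators

/-- The square root of a positive semidefinite matrix, as defined in the older Mathlib
(`Matrix.PosSemidef.sqrt`, removed since): `U * diagonal (√λ) * Uᴴ`. -/
noncomputable def Matrix.PosSemidef.sqrt {n : Type*} [Fintype n] [DecidableEq n]
    {A : Matrix n n ℝ} (hA : A.PosSemidef) : Matrix n n ℝ :=
  hA.1.eigenvectorUnitary.1 * diagonal (Real.sqrt ∘ hA.1.eigenvalues) *
    (star hA.1.eigenvectorUnitary : Matrix n n ℝ)

/-!
Write `Â = S P S` with `S = A^{1/2}`. Both `A - Â = S (1 - P) S` and `Â - Â_(k)` are positive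
semidefinite, so `A - Â_(k)` is too, and its nuclear norm is its trace `tr A - (ν₁ + ⋯ + ν_k)`,
where `ν` are the eigenvalues of `Â`. On the other side `‖A - P̄A‖_* ≥ tr (A - P̄A)`. Since `P`
fixes the range of `S Q`, which contains that of `S P̄`, we get
`tr (Â P̄) = tr (P S P̄ S) = tr (S P̄ S) = tr (A P̄)`, and by Ky Fan's maximum principle
`tr (Â P̄) ≤ ν₁ + ⋯ + ν_k` for an orthogonal projector `P̄` of rank at most `k`.
-/

open scoped MatrixOrder

lemma OrthonormalBasis.dotProduct_self {ι : Type*} [Fintype ι]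
    (b : OrthonormalBasis ι ℝ (EuclideanSpace ℝ ι)) (i : ι) : ⇑(b i) ⬝ᵥ ⇑(b i) = 1 := by
  have := real_inner_self_eq_norm_sq (b i)
  rw [b.orthonormal.1 i, EuclideanSpace.inner_eq_star_dotProduct] at this
  simpa using this

namespace Matrix

lemma isHermitian_transpose_mul_self {κ ι : Type*} [Fintype κ] (M : Matrix κ ι ℝ) :
    (Mᵀ * M).IsHermitian := by
  simpa using isHermitian_conjTranspose_mul_self M

variable {ι : Type*} [Fintype ι]

lemma dotProduct_le_sqrt_mul_sqrt (v w : ι → ℝ) : v ⬝ᵥ w ≤ √(v ⬝ᵥ v) * √(w ⬝ᵥ w) := by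
  simpa [dotProduct, sq] using Real.sum_mul_le_sqrt_mul_sqrt Finset.univ v w

lemma PosSemidef.mul_mul_transpose_same {M : Matrix ι ι ℝ} (hM : M.PosSemidef)
    {κ : Type*} [Fintype κ] (B : Matrix κ ι ℝ) : (B * M * Bᵀ).PosSemidef := by
  simpa using hM.mul_mul_conjTranspose_same B

lemma PosSemidef.of_transpose_eq_of_isIdempotentElem {X : Matrix ι ι ℝ} (hXt : Xᵀ = X)
    (hX : IsIdempotentElem X) : X.PosSemidef := by
  simpa [hXt, hX.eq] using posSemidef_conjTranspose_mul_self X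

lemma PosSemidef.mulVec_eq_smul_of_mulVec_mulVec_eq {M : Matrix ι ι ℝ} (hM : M.PosSemidef)
    {c : ℝ} (hc : 0 ≤ c) {v : ι → ℝ} (hv : M *ᵥ (M *ᵥ v) = (c * c) • v) :
    M *ᵥ v = c • v := by
  obtain ⟨w, hw⟩ : ∃ w, w = M *ᵥ v - c • v := ⟨_, rfl⟩
  have hMw_eq : M *ᵥ w = -(c • w) := by
    simp only [hw, mulVec_sub, mulVec_smul, hv, smul_sub, smul_smul]
    abel
  -- `w ⬝ᵥ M w = -c (w ⬝ᵥ w) ≤ 0` forces `M w = 0`, hence `c w = 0`.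
  have hMw : M *ᵥ w = 0 := by
    refine (hM.dotProduct_mulVec_zero_iff w).1 (le_antisymm ?_ (hM.dotProduct_mulVec_nonneg w))
    rw [hMw_eq, star_trivial, dotProduct_neg, dotProduct_smul, smul_eq_mul, neg_nonpos]
    exact mul_nonneg hc (by simpa using dotProduct_self_star_nonneg w)
  have hcw : c • w = 0 := by rw [← neg_eq_zero, ← hMw_eq, hMw]
  have hMt : Mᵀ = M := by rw [← conjTranspose_eq_transpose_of_trivial, hM.1.eq]
  have hww : w ⬝ᵥ w = 0 :=
    calc w ⬝ᵥ w = w ⬝ᵥ (M *ᵥ v) - (c • w) ⬝ᵥ v := by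
          nth_rewrite 2 [hw]
          rw [dotProduct_sub, dotProduct_smul, smul_dotProduct]
      _ = (M *ᵥ w) ⬝ᵥ v - (c • w) ⬝ᵥ v := by
          rw [dotProduct_mulVec, ← mulVec_transpose, hMt]
      _ = 0 := by rw [hMw, hcw, zero_dotProduct, sub_zero]
  rw [← sub_eq_zero, ← hw]
  exact dotProduct_self_eq_zero.mp hww

lemma trace_mul_mul_mul_eq_of_mul_eq {S P X : Matrix ι ι ℝ} (h : P * (S * X) = S * X) :
    (S * P * S * X).trace = (S * S * X).trace := by
  rw [Matrix.mul_assoc S P S, Matrix.mul_assoc S, trace_mul_comm S, Matrix.mul_assoc P, h,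
    trace_mul_comm (S * X) S, Matrix.mul_assoc]

variable [DecidableEq ι]

lemma trace_eq_sum_dotProduct_mulVec (M : Matrix ι ι ℝ)
    (b : OrthonormalBasis ι ℝ (EuclideanSpace ℝ ι)) :
    M.trace = ∑ i, ⇑(b i) ⬝ᵥ M *ᵥ ⇑(b i) := by
  rw [← M.trace_toLin_eq (PiLp.basisFun 2 ℝ ι), ← toLpLin_eq_toLin,
    LinearMap.trace_eq_sum_inner _ b]
  simp [EuclideanSpace.inner_eq_star_dotProduct, toLpLin_apply, dotProduct_comm]

lemma dotProduct_mulVec_self_eq_eigenvalues {κ : Type*} [Fintype κ] (M : Matrix κ ι ℝ)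
    (h : (Mᵀ * M).IsHermitian) (i : ι) :
    (M *ᵥ ⇑(h.eigenvectorBasis i)) ⬝ᵥ (M *ᵥ ⇑(h.eigenvectorBasis i)) = h.eigenvalues i := by
  rw [dotProduct_mulVec, ← mulVec_transpose, dotProduct_comm, mulVec_mulVec,
    h.mulVec_eigenvectorBasis, dotProduct_smul, h.eigenvectorBasis.dotProduct_self,
    smul_eq_mul, mul_one]

lemma trace_eq_rank_of_isIdempotentElem {K : Type*} [Field K] {X : Matrix ι ι K}
    (hX : IsIdempotentElem X) : X.trace = X.rank := by
  have hf : IsIdempotentElem (toLin' X) := hX.map toLinAlgEquiv'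
  rw [rank, ← X.trace_toLin'_eq, ((LinearMap.isProj_range_iff_isIdempotentElem _).2 hf).trace]
  rfl

namespace PosSemidef

variable {A : Matrix ι ι ℝ}

lemma sqrt_eq_cfcSqrt (hA : A.PosSemidef) : hA.sqrt = CFC.sqrt A := by
  rw [CFC.sqrt_eq_real_sqrt A hA.nonneg, cfcₙ_eq_cfc, hA.1.cfc_eq, IsHermitian.cfc,
    Unitary.conjStarAlgAut_apply, sqrt]
  rfl

lemma transpose_sqrt (hA : A.PosSemidef) : hA.sqrtᵀ = hA.sqrt := by
  rw [← conjTranspose_eq_transpose_of_trivial, sqrt_eq_cfcSqrt]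
  exact (nonneg_iff_posSemidef.1 (CFC.sqrt_nonneg A)).1.eq

lemma sqrt_mul_self (hA : A.PosSemidef) : hA.sqrt * hA.sqrt = A := by
  rw [sqrt_eq_cfcSqrt, CFC.sqrt_mul_sqrt_self A hA.nonneg]

lemma sqrt_mul_mul_sqrt {P : Matrix ι ι ℝ} (hA : A.PosSemidef) (hPt : Pᵀ = P)
    (hP : IsIdempotentElem P) : (hA.sqrt * P * hA.sqrt).PosSemidef := by
  simpa [hA.transpose_sqrt] using
    (of_transpose_eq_of_isIdempotentElem hPt hP).mul_mul_transpose_same hA.sqrt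

lemma sub_sqrt_mul_mul_sqrt {P : Matrix ι ι ℝ} (hA : A.PosSemidef) (hPt : Pᵀ = P)
    (hP : IsIdempotentElem P) : (A - hA.sqrt * P * hA.sqrt).PosSemidef := by
  have := (of_transpose_eq_of_isIdempotentElem (by simp [hPt]) hP.one_sub).mul_mul_transpose_same
    hA.sqrt
  rwa [Matrix.mul_sub, Matrix.sub_mul, Matrix.mul_one, hA.transpose_sqrt, hA.sqrt_mul_self]
    at this

end PosSemidef

end Matrix

open Matrix

section NuclearNorm

variable {m l : ℕ}

lemma nuclearNorm_eq_sum_sqrt_eigenvalues (M : Matrix (Fin m) (Fin l) ℝ) :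
    nuclearNorm M = ∑ i, √((isHermitian_transpose_mul_self M).eigenvalues i) :=
  Equiv.sum_comp (Fin.revPerm.trans (Tuple.sort (isHermitian_transpose_mul_self M).eigenvalues))
    (fun i => √((isHermitian_transpose_mul_self M).eigenvalues i))

lemma trace_le_nuclearNorm (M : Matrix (Fin m) (Fin m) ℝ) : M.trace ≤ nuclearNorm M := by
  set h := isHermitian_transpose_mul_self M
  rw [trace_eq_sum_dotProduct_mulVec M h.eigenvectorBasis, nuclearNorm_eq_sum_sqrt_eigenvalues]
  gcongr with i
  simpa [h.eigenvectorBasis.dotProduct_self, dotProduct_mulVec_self_eq_eigenvalues] using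
    dotProduct_le_sqrt_mul_sqrt (h.eigenvectorBasis i) (M *ᵥ h.eigenvectorBasis i)

lemma Matrix.PosSemidef.nuclearNorm_eq_trace {M : Matrix (Fin m) (Fin m) ℝ}
    (hM : M.PosSemidef) : nuclearNorm M = M.trace := by
  set h := isHermitian_transpose_mul_self M
  have hMt : Mᵀ = M := by rw [← conjTranspose_eq_transpose_of_trivial, hM.1.eq]
  rw [trace_eq_sum_dotProduct_mulVec M h.eigenvectorBasis, nuclearNorm_eq_sum_sqrt_eigenvalues]
  refine Finset.sum_congr rfl fun i _ => ?_
  have hd : 0 ≤ h.eigenvalues i := by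
    rw [← dotProduct_mulVec_self_eq_eigenvalues M h i]
    simpa using dotProduct_self_star_nonneg (M *ᵥ h.eigenvectorBasis i)
  have hMb : M *ᵥ h.eigenvectorBasis i = √(h.eigenvalues i) • ⇑(h.eigenvectorBasis i) := by
    refine hM.mulVec_eq_smul_of_mulVec_mulVec_eq (Real.sqrt_nonneg _) ?_
    rw [Real.mul_self_sqrt hd, ← h.mulVec_eigenvectorBasis, mulVec_mulVec]
    congr 2
    exact hMt.symm
  rw [hMb, dotProduct_smul, h.eigenvectorBasis.dotProduct_self, smul_eq_mul, mul_one]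

end NuclearNorm

open Finset in
lemma Antitone.sum_mul_le_sum_ite_lt {m k : ℕ} {ν t : Fin m → ℝ} (hν : Antitone ν)
    (hν0 : ∀ i, 0 ≤ ν i) (ht0 : ∀ i, 0 ≤ t i) (ht1 : ∀ i, t i ≤ 1) (htk : ∑ i, t i ≤ k) :
    ∑ i, ν i * t i ≤ ∑ i : Fin m, if (i : ℕ) < k then ν i else 0 := by
  rcases le_or_gt m k with hmk | hkm
  · refine sum_le_sum fun i _ => ?_
    rw [if_pos (by omega)]
    nlinarith [hν0 i, ht1 i]
  -- The threshold `c = ν k` bounds the first `k` values from below and the others from above.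
  set c := ν ⟨k, hkm⟩
  have hterm : ∀ i, ν i * t i ≤
      (if (i : ℕ) < k then ν i else 0) + c * (t i - if (i : ℕ) < k then 1 else 0) := by
    intro i
    split_ifs with hik
    · have : c ≤ ν i := hν (Fin.le_def.2 hik.le)
      nlinarith [ht1 i]
    · have : ν i ≤ c := hν (Fin.le_def.2 (not_lt.1 hik))
      nlinarith [ht0 i]
  have hcard : ∑ i : Fin m, (if (i : ℕ) < k then (1 : ℝ) else 0) = k := by
    rw [sum_boole, Fin.card_filter_val_lt, min_eq_right hkm.le]
  calc ∑ i, ν i * t i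
      ≤ ∑ i : Fin m, ((if (i : ℕ) < k then ν i else 0) +
          c * (t i - if (i : ℕ) < k then 1 else 0)) := sum_le_sum fun i _ => hterm i
    _ = (∑ i : Fin m, if (i : ℕ) < k then ν i else 0) + c * (∑ i, t i - k) := by
        rw [sum_add_distrib, ← mul_sum, sum_sub_distrib, hcard]
    _ ≤ ∑ i : Fin m, if (i : ℕ) < k then ν i else 0 := by
        nlinarith [hν0 ⟨k, hkm⟩]

namespace IsSpectralDecomp

variable {n : ℕ} {M W : Matrix (Fin n) (Fin n) ℝ} {ν : Fin n → ℝ}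

lemma transpose_mul_mul (h : IsSpectralDecomp M W ν) : Wᵀ * M * W = diagonal ν := by
  obtain ⟨hW, -, rfl⟩ := h
  rw [Matrix.mul_assoc, Matrix.mul_assoc, hW, Matrix.mul_one, ← Matrix.mul_assoc, hW,
    Matrix.one_mul]

lemma nonneg_of_posSemidef (h : IsSpectralDecomp M W ν) (hM : M.PosSemidef) (i : Fin n) :
    0 ≤ ν i := by
  simpa [h.transpose_mul_mul] using (hM.mul_mul_transpose_same Wᵀ).diag_nonneg (i := i)

lemma trace_trunc (h : IsSpectralDecomp M W ν) (k : ℕ) :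
    (trunc k W ν).trace = ∑ i : Fin n, if (i : ℕ) < k then ν i else 0 := by
  rw [trunc, trace_mul_cycle, h.1, Matrix.one_mul, trace_diagonal]

lemma sub_trunc_posSemidef (h : IsSpectralDecomp M W ν) (hν : ∀ i, 0 ≤ ν i) (k : ℕ) :
    (M - trunc k W ν).PosSemidef := by
  have htail : M - trunc k W ν =
      W * diagonal (fun i : Fin n => if (i : ℕ) < k then 0 else ν i) * Wᵀ := by
    rw [h.2.2, trunc, ← Matrix.sub_mul, ← Matrix.mul_sub, diagonal_sub]
    congr 3
    funext i
    split_ifs <;> simp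
  rw [htail]
  refine PosSemidef.mul_mul_transpose_same (posSemidef_diagonal_iff.2 fun i => ?_) W
  split_ifs
  exacts [le_rfl, hν i]

open Finset in
lemma trace_mul_le_of_isIdempotentElem (h : IsSpectralDecomp M W ν) (hν : ∀ i, 0 ≤ ν i)
    {X : Matrix (Fin n) (Fin n) ℝ} (hXt : Xᵀ = X) (hX : IsIdempotentElem X) {k : ℕ}
    (hXk : X.rank ≤ k) :
    (M * X).trace ≤ ∑ i : Fin n, if (i : ℕ) < k then ν i else 0 := by
  have hWt : W * Wᵀ = 1 := mul_eq_one_comm.mp h.1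
  set t : Fin n → ℝ := fun i => (Wᵀ * X * W) i i
  have hMX : (M * X).trace = ∑ i, ν i * t i := by
    rw [h.2.2, Matrix.mul_assoc, Matrix.mul_assoc, trace_mul_comm, Matrix.mul_assoc,
      trace_mul_comm]
    simp [trace, t, mul_diagonal, mul_comm]
  have hconj : (Wᵀ * X * W).PosSemidef := by
    simpa using (PosSemidef.of_transpose_eq_of_isIdempotentElem hXt hX).mul_mul_transpose_same Wᵀ
  have hconj_compl : (1 - Wᵀ * X * W).PosSemidef := by
    have := (PosSemidef.of_transpose_eq_of_isIdempotentElem (by simp [hXt]) hX.one_sub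
      ).mul_mul_transpose_same Wᵀ
    rwa [transpose_transpose, Matrix.mul_sub, Matrix.sub_mul, Matrix.mul_one, h.1] at this
  have ht1 : ∀ i, t i ≤ 1 := fun i => by
    simpa [t] using hconj_compl.diag_nonneg (i := i)
  have htk : ∑ i, t i ≤ k := by
    change (Wᵀ * X * W).trace ≤ k
    rw [trace_mul_cycle, hWt, Matrix.one_mul, trace_eq_rank_of_isIdempotentElem hX]
    exact_mod_cast hXk
  rw [hMX]
  exact h.2.1.sum_mul_le_sum_ite_lt hν (fun i => hconj.diag_nonneg) ht1 htk

end IsSpectralDecomp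

theorem nuclear_projection_to_nystrom_general
    (n l k : ℕ) (ε : ℝ)
    (A U : Matrix (Fin n) (Fin n) ℝ) (μ : Fin n → ℝ)
    (hA : A.PosSemidef)
    (Q : Matrix (Fin n) (Fin l) ℝ)
    (Pbar : Matrix (Fin n) (Fin n) ℝ)
    (hPbarSymm : Pbarᵀ = Pbar) (hPbarIdem : Pbar * Pbar = Pbar)
    (hPbarRank : Pbar.rank ≤ k) (hPbarRange : ∃ Y : Matrix (Fin l) (Fin n) ℝ, Pbar = Q * Y)
    (hnear : nuclearNorm (A - Pbar * A) ≤ (1 + ε) * nuclearNorm (A - trunc k U μ))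
    (P Ahat : Matrix (Fin n) (Fin n) ℝ)
    (hP : IsOrthProjOnto P (hA.sqrt * Q))
    (hAhat : Ahat = hA.sqrt * P * hA.sqrt) :
    ∀ (W : Matrix (Fin n) (Fin n) ℝ) (ν : Fin n → ℝ), IsSpectralDecomp Ahat W ν →
      nuclearNorm (A - trunc k W ν) ≤ (1 + ε) * nuclearNorm (A - trunc k U μ) := by
  intro W ν hdec
  obtain ⟨hPt, hPidem, hPfix, -⟩ := hP
  obtain ⟨Y, hY⟩ := hPbarRange
  have hν := hdec.nonneg_of_posSemidef (hAhat ▸ hA.sqrt_mul_mul_sqrt hPt hPidem)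
  have hpsd : (A - trunc k W ν).PosSemidef := by
    simpa [hAhat] using (hA.sub_sqrt_mul_mul_sqrt hPt hPidem).add (hdec.sub_trunc_posSemidef hν k)
  have hfix : P * (hA.sqrt * Pbar) = hA.sqrt * Pbar := by
    rw [hY, ← Matrix.mul_assoc _ Q, ← Matrix.mul_assoc, hPfix]
  have htrace : (Ahat * Pbar).trace = (A * Pbar).trace := by
    rw [hAhat, trace_mul_mul_mul_eq_of_mul_eq hfix, hA.sqrt_mul_self]
  calc nuclearNorm (A - trunc k W ν)
      = A.trace - ∑ i : Fin n, if (i : ℕ) < k then ν i else 0 := by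
        rw [hpsd.nuclearNorm_eq_trace, trace_sub, hdec.trace_trunc]
    _ ≤ A.trace - (Ahat * Pbar).trace := by
        linarith [hdec.trace_mul_le_of_isIdempotentElem hν hPbarSymm hPbarIdem hPbarRank]
    _ = (A - Pbar * A).trace := by rw [trace_sub, trace_mul_comm Pbar, htrace]
    _ ≤ nuclearNorm (A - Pbar * A) := trace_le_nuclearNorm _
    _ ≤ (1 + ε) * nuclearNorm (A - trunc k U μ) := hnear

/-- Good projections imply good Nyström approximations (nuclear norm):
if `Q` has orthonormal columns and some orthogonal projector `P̄` of rank `≤ k` with column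
space inside that of `Q` satisfies `‖A − P̄A‖_* ≤ (1+ε)‖A − A_(k)‖_*`, then the Nyström
approximation `Â = A^{1/2} P A^{1/2}` (with `P` the orthogonal projection onto the column
space of `A^{1/2}Q`) satisfies `‖A − Â_(k)‖_* ≤ (1+ε)‖A − A_(k)‖_*`. -/
theorem nuclear_projection_to_nystrom
    (n l k : ℕ) (hk : 1 ≤ k) (hkn : k < n) (ε : ℝ) (hε : 0 ≤ ε)
    (A U : Matrix (Fin n) (Fin n) ℝ) (μ : Fin n → ℝ)
    (hA : A.PosSemidef) (hdecA : IsSpectralDecomp A U μ)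
    (Q : Matrix (Fin n) (Fin l) ℝ) (hQ : Qᵀ * Q = 1)
    (Pbar : Matrix (Fin n) (Fin n) ℝ)
    (hPbarSymm : Pbarᵀ = Pbar) (hPbarIdem : Pbar * Pbar = Pbar)
    (hPbarRank : Pbar.rank ≤ k) (hPbarRange : ∃ Y : Matrix (Fin l) (Fin n) ℝ, Pbar = Q * Y)
    (hnear : nuclearNorm (A - Pbar * A) ≤ (1 + ε) * nuclearNorm (A - trunc k U μ))
    (P Ahat : Matrix (Fin n) (Fin n) ℝ)
    (hP : IsOrthProjOnto P (hA.sqrt * Q))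
    (hAhat : Ahat = hA.sqrt * P * hA.sqrt) :
    ∀ (W : Matrix (Fin n) (Fin n) ℝ) (ν : Fin n → ℝ), IsSpectralDecomp Ahat W ν →
      nuclearNorm (A - trunc k W ν) ≤ (1 + ε) * nuclearNorm (A - trunc k U μ) :=
  nuclear_projection_to_nystrom_general n l k ε A U μ hA Q Pbar hPbarSymm hPbarIdem hPbarRank
    hPbarRange hnear P Ahat hP hAhat
end
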